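/- Let v_1, …, v_5 ∈ ℂ^3 satisfy det(v_2, v_3, v_4) = 1 and det(v_3, v_4, v_5) = 1. Then det(v_1, v_3, v_4)·det(v_2, v_4, v_5) − det(v_1, v_2, v_4) = det(v_1, v_4, v_5). -/

import Mathlib

/-! This is the Plücker relation for the pair `(v₄, v₅)` against `(v₁, v₂, v₃, v₄)`: its term
containing `det(v₄, v₄, v₅)` vanishes, and the normalisations `det(v₂, v₃, v₄) = 1` and
`det(v₃, v₄, v₅) = 1` reduce the remaining three terms to the identity. -/

/-- The determinant of the `3 × 3` matrix whose columns are `u 0, u 1, u 2`. -/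
noncomputable def cdet (u : Fin 3 → Fin 3 → ℂ) : ℂ :=
  (Matrix.of fun i j => u j i).det

namespace Matrix

theorem det_fin_three_plucker {R : Type*} [CommRing R] (a b c d x y : Fin 3 → R) :
    (of ![a, x, y]).det * (of ![b, c, d]).det - (of ![b, x, y]).det * (of ![a, c, d]).det +
      (of ![c, x, y]).det * (of ![a, b, d]).det - (of ![d, x, y]).det * (of ![a, b, c]).det
      = 0 := by
  simp only [det_fin_three, of_apply, cons_val_zero, cons_val_one, cons_val_two, head_cons,
    tail_cons]
  ring

end Matrix

theorem cdet_eq_det (u : Fin 3 → Fin 3 → ℂ) : cdet u = (Matrix.of u).det := by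
  rw [cdet, ← Matrix.det_transpose]
  rfl

/-- The identity `P_{1,3,4} P_{2,4,5} − P_{1,2,4} = P_{1,4,5}` from
Section 6 of the paper, given `det(v_2,v_3,v_4) = det(v_3,v_4,v_5) = 1`. -/
theorem stmt_12 (v1 v2 v3 v4 v5 : Fin 3 → ℂ)
    (h1 : cdet ![v2, v3, v4] = 1) (h2 : cdet ![v3, v4, v5] = 1) :
    cdet ![v1, v3, v4] * cdet ![v2, v4, v5] - cdet ![v1, v2, v4] = cdet ![v1, v4, v5] := by
  have hP := Matrix.det_fin_three_plucker v1 v2 v3 v4 v4 v5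
  have hrep : (Matrix.of ![v4, v4, v5]).det = 0 :=
    Matrix.det_zero_of_row_eq (i := 0) (j := 1) (by decide) rfl
  rw [hrep] at hP
  simp only [← cdet_eq_det] at hP
  linear_combination -hP + cdet ![v1, v4, v5] * h1 + cdet ![v1, v2, v4] * h2
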